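/- arXiv:0811.3303 — 5 statements merged into one kernel-verified Lean document; each statement's English description precedes it below -/
import Mathlib

section
/- Let u = u₀ t_{i₁}^{α₁} u₁ ⋯ t_{i_p}^{α_p} u_p and v = v₀ t_{j₁}^{β₁} v₁ ⋯ t_{j_q}^{β_q} v_q be reduced words. Let d = d(u,v) be the largest number d ≥ 0 such that (a) A_{i_{p−d+1}}(α_{p−d+1}) = A_{j_d}(−β_d) (with the convention A_{i_{p+1}}(α_{p+1}) = A_{j_0}(−β_0) = 1), and (b) there exists c ∈ A_{j_d}(−β_d) with t_{i_{p−d+1}}^{α_{p−d+1}} u_{p−d+1} ⋯ t_{i_p}^{α_p} u_p v₀ t_{j₁}^{β₁} ⋯ v_{d−1} t_{j_d}^{β_d} = c in G (condition (b) holds for d = 0). Let c(u,v) ∈ A_{j_d}(−β_d) be the element c in (b) for d = d(u,v). Then the word u₀ t_{i₁}^{α₁} u₁ ⋯ t_{i_{p−d}}^{α_{p−d}} (u_{p−d} · c(u,v) · v_d) t_{j_{d+1}}^{β_{d+1}} v_{d+1} ⋯ t_{j_q}^{β_q} v_q is a reduced word that is equal to uv in G. -/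
/-!
Multiple HNN-extension `G = ⟨H, t₁, …, tₙ | tᵢ⁻¹ a tᵢ = φᵢ(a) (a ∈ Aᵢ)⟩`, presented
as a `PresentedGroup` on the alphabet `H ⊕ ι`.
-/

/-- Relators of the multiple HNN-extension presentation. -/
def hnnRels {H : Type*} [Group H] {ι : Type*} (A B : ι → Subgroup H)
    (φ : ∀ i, A i ≃* B i) : Set (FreeGroup (H ⊕ ι)) :=
  {r | ∃ h₁ h₂ : H, r = FreeGroup.of (Sum.inl h₁) * FreeGroup.of (Sum.inl h₂) *
        (FreeGroup.of (Sum.inl (h₁ * h₂)))⁻¹} ∪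
  {r | ∃ (i : ι) (a : A i), r = (FreeGroup.of (Sum.inr i))⁻¹ *
        FreeGroup.of (Sum.inl (a : H)) * FreeGroup.of (Sum.inr i) *
        (FreeGroup.of (Sum.inl ((φ i a : B i) : H)))⁻¹}

/-- The multiple HNN-extension of `H`. -/
abbrev MHNN {H : Type*} [Group H] {ι : Type*} (A B : ι → Subgroup H)
    (φ : ∀ i, A i ≃* B i) :=
  PresentedGroup (hnnRels A B φ)

/-- Canonical generators: `Sum.inl h` for `h ∈ H`, `Sum.inr i` for the stable letter `tᵢ`. -/
def gen {H : Type*} [Group H] {ι : Type*} (A B : ι → Subgroup H)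
    (φ : ∀ i, A i ≃* B i) (x : H ⊕ ι) : MHNN A B φ :=
  PresentedGroup.of x

/-- The element represented by the word `u₀ t_{idx 0}^{e 0} u₁ ⋯ t_{idx (ℓ-1)}^{e (ℓ-1)} u_ℓ`. -/
def wordProd {H : Type*} [Group H] {ι : Type*} (A B : ι → Subgroup H)
    (φ : ∀ i, A i ≃* B i) (ℓ : ℕ) (u : ℕ → H) (idx : ℕ → ι) (e : ℕ → ℤ) :
    MHNN A B φ :=
  gen A B φ (Sum.inl (u 0)) *
    ((List.range ℓ).map fun k =>
      gen A B φ (Sum.inr (idx k)) ^ e k * gen A B φ (Sum.inl (u (k + 1)))).prod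

/-- `side A B i e` is `A i (e)`, i.e. `A i` if `e = 1` and `B i` if `e = -1`. -/
def side {H : Type*} [Group H] {ι : Type*} (A B : ι → Subgroup H) (i : ι) (e : ℤ) :
    Subgroup H :=
  if e = 1 then A i else B i

/-- The word is reduced: exponents are `±1`, no factor `tᵢ^{-α} w tᵢ^{α}` with `w ∈ A i (α)`. -/
def ReducedWord {H : Type*} [Group H] {ι : Type*} (A B : ι → Subgroup H)
    (ℓ : ℕ) (u : ℕ → H) (idx : ℕ → ι) (e : ℕ → ℤ) : Prop :=
  (∀ k < ℓ, e k = 1 ∨ e k = -1) ∧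
  ∀ k, k + 1 < ℓ → idx k = idx (k + 1) → e k = -e (k + 1) →
    u (k + 1) ∉ side A B (idx k) (e (k + 1))

/-- The element of `G` represented by the "middle" word
`t_{i_{p-d+1}}^{α_{p-d+1}} u_{p-d+1} ⋯ t_{i_p}^{α_p} u_p v₀ t_{j_1}^{β_1} ⋯ v_{d-1} t_{j_d}^{β_d}`
(`0`-based: the last `d` stable letters of `u` together with `v₀ ⋯ v_{d-1}` and the first
`d` stable letters of `v`). -/
def midProd {H : Type*} [Group H] {ι : Type*} (A B : ι → Subgroup H)
    (φ : ∀ i, A i ≃* B i) (p : ℕ) (u : ℕ → H) (iu : ℕ → ι) (eu : ℕ → ℤ)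
    (v : ℕ → H) (iv : ℕ → ι) (ev : ℕ → ℤ) (d : ℕ) : MHNN A B φ :=
  ((List.range d).map fun k =>
      gen A B φ (Sum.inr (iu (p - d + k))) ^ eu (p - d + k) *
        gen A B φ (Sum.inl (u (p - d + k + 1)))).prod *
  ((List.range d).map fun k =>
      gen A B φ (Sum.inl (v k)) * gen A B φ (Sum.inr (iv k)) ^ ev k).prod

/-- The cancellation condition (a) ∧ (b) of the lemma, for a given `d ≥ 0`
(it holds trivially for `d = 0`). -/
def CancelCond {H : Type*} [Group H] {ι : Type*} (A B : ι → Subgroup H)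
    (φ : ∀ i, A i ≃* B i) (p q : ℕ) (u : ℕ → H) (iu : ℕ → ι) (eu : ℕ → ℤ)
    (v : ℕ → H) (iv : ℕ → ι) (ev : ℕ → ℤ) (d : ℕ) : Prop :=
  d = 0 ∨ (1 ≤ d ∧ d ≤ p ∧ d ≤ q ∧
    side A B (iu (p - d)) (eu (p - d)) = side A B (iv (d - 1)) (-(ev (d - 1))) ∧
    ∃ c ∈ side A B (iv (d - 1)) (-(ev (d - 1))),
      midProd A B φ p u iu eu v iv ev d = gen A B φ (Sum.inl c))

/-!
The product `u v` is the first `p - d` syllables of `u`, then the middle word of `midProd`, which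
equals `c`, then `v_d` and the remaining syllables of `v`; absorbing `c` into `u_{p-d} c v_d`
gives the spliced word. Since `u` and `v` are reduced, the spliced word can only contain a pinch
`t^{-ε} w t^{ε}` at the junction, with `w = u_{p-d} c v_d`. The relation
`t^{-ε} w t^{ε} = φ^{ε}(w)` would then turn the middle word for `d + 1` into an element of the
opposite associated subgroup, so `d + 1` would also satisfy the cancellation condition,
contradicting the maximality of `d`.
-/

section Presentation

variable {H : Type*} [Group H] {ι : Type*} (A B : ι → Subgroup H) (φ : ∀ i, A i ≃* B i)

theorem gen_inl_mul (x y : H) :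
    gen A B φ (Sum.inl x) * gen A B φ (Sum.inl y) = gen A B φ (Sum.inl (x * y)) :=
  PresentedGroup.mk_eq_mk_of_mul_inv_mem (Or.inl ⟨x, y, rfl⟩)

theorem gen_inl_one : gen A B φ (Sum.inl (1 : H)) = 1 :=
  mul_eq_right.mp ((gen_inl_mul A B φ 1 1).trans (by rw [mul_one]))

theorem inv_gen_inr_mul_gen_inl_mul_gen_inr (i : ι) (a : A i) :
    (gen A B φ (Sum.inr i))⁻¹ * gen A B φ (Sum.inl (a : H)) * gen A B φ (Sum.inr i) =
      gen A B φ (Sum.inl (φ i a : H)) :=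
  PresentedGroup.mk_eq_mk_of_mul_inv_mem (Or.inr ⟨i, a, rfl⟩)

@[simp] theorem side_one (i : ι) : side A B i 1 = A i := if_pos rfl

@[simp] theorem side_neg_one (i : ι) : side A B i (-1) = B i := if_neg (by decide)

theorem exists_mem_side_neg_conj_eq {i : ι} {ε : ℤ} (hε : ε = 1 ∨ ε = -1) {w : H}
    (hw : w ∈ side A B i ε) :
    ∃ c ∈ side A B i (-ε),
      gen A B φ (Sum.inr i) ^ (-ε) * gen A B φ (Sum.inl w) * gen A B φ (Sum.inr i) ^ ε =
        gen A B φ (Sum.inl c) := by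
  rcases hε with rfl | rfl
  · rw [side_one] at hw
    refine ⟨φ i ⟨w, hw⟩, by simp, ?_⟩
    simpa using inv_gen_inr_mul_gen_inl_mul_gen_inr A B φ i ⟨w, hw⟩
  · rw [side_neg_one] at hw
    refine ⟨(φ i).symm ⟨w, hw⟩, by simp, ?_⟩
    have h := inv_gen_inr_mul_gen_inl_mul_gen_inr A B φ i ((φ i).symm ⟨w, hw⟩)
    rw [MulEquiv.apply_symm_apply] at h
    rw [← h]
    group

end Presentation

theorem List.mul_prod_range_eq_prod_range_mul {M : Type*} [Monoid M] (f g : ℕ → M) (n : ℕ) :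
    f 0 * ((List.range n).map fun k => g k * f (k + 1)).prod =
      ((List.range n).map fun k => f k * g k).prod * f n := by
  induction n with
  | zero => simp
  | succ n ih => simp only [List.prod_range_succ, ← mul_assoc, ih]

section Words

variable {H : Type*} [Group H] {ι : Type*} (A B : ι → Subgroup H) (φ : ∀ i, A i ≃* B i)

def syllableProd (m ℓ : ℕ) (u : ℕ → H) (idx : ℕ → ι) (e : ℕ → ℤ) : MHNN A B φ :=
  ((List.range ℓ).map fun k =>
    gen A B φ (Sum.inr (idx (m + k))) ^ e (m + k) * gen A B φ (Sum.inl (u (m + k + 1)))).prod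

variable {A B φ}

theorem wordProd_add (ℓ₁ ℓ₂ : ℕ) (u : ℕ → H) (idx : ℕ → ι) (e : ℕ → ℤ) :
    wordProd A B φ (ℓ₁ + ℓ₂) u idx e =
      wordProd A B φ ℓ₁ u idx e * syllableProd A B φ ℓ₁ ℓ₂ u idx e := by
  rw [wordProd, wordProd, syllableProd, List.range_add, List.map_append, List.prod_append,
    List.map_map, mul_assoc]
  rfl

theorem wordProd_succ (ℓ : ℕ) (u : ℕ → H) (idx : ℕ → ι) (e : ℕ → ℤ) :
    wordProd A B φ (ℓ + 1) u idx e = wordProd A B φ ℓ u idx e *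
      (gen A B φ (Sum.inr (idx ℓ)) ^ e ℓ * gen A B φ (Sum.inl (u (ℓ + 1)))) := by
  rw [wordProd, wordProd, List.prod_range_succ, mul_assoc]

theorem wordProd_congr {ℓ : ℕ} {u u' : ℕ → H} {idx idx' : ℕ → ι} {e e' : ℕ → ℤ}
    (hu : ∀ k ≤ ℓ, u' k = u k) (hidx : ∀ k < ℓ, idx' k = idx k) (he : ∀ k < ℓ, e' k = e k) :
    wordProd A B φ ℓ u' idx' e' = wordProd A B φ ℓ u idx e := by
  rw [wordProd, wordProd, hu 0 ℓ.zero_le]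
  congr 2
  refine List.map_congr_left fun k hk => ?_
  have hk := List.mem_range.mp hk
  rw [hu (k + 1) hk, hidx k hk, he k hk]

theorem wordProd_mul_gen_inl {ℓ : ℕ} {u u' : ℕ → H} {idx : ℕ → ι} {e : ℕ → ℤ} {x : H}
    (hu : ∀ k < ℓ, u' k = u k) (hℓ : u' ℓ = u ℓ * x) :
    wordProd A B φ ℓ u idx e * gen A B φ (Sum.inl x) = wordProd A B φ ℓ u' idx e := by
  cases ℓ with
  | zero => rw [wordProd, wordProd, hℓ, ← gen_inl_mul]; simp
  | succ ℓ =>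
    rw [wordProd_succ, wordProd_succ, hℓ, ← gen_inl_mul,
      wordProd_congr (fun k hk => hu k (by omega)) (fun _ _ => rfl) (fun _ _ => rfl)]
    simp only [mul_assoc]

theorem wordProd_eq_prod_mul (ℓ : ℕ) (u : ℕ → H) (idx : ℕ → ι) (e : ℕ → ℤ) :
    wordProd A B φ ℓ u idx e =
      ((List.range ℓ).map fun k =>
        gen A B φ (Sum.inl (u k)) * gen A B φ (Sum.inr (idx k)) ^ e k).prod *
      gen A B φ (Sum.inl (u ℓ)) :=
  List.mul_prod_range_eq_prod_range_mul (fun k => gen A B φ (Sum.inl (u k)))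
    (fun k => gen A B φ (Sum.inr (idx k)) ^ e k) ℓ

theorem wordProd_mul_wordProd {p q d : ℕ} (hdp : d ≤ p) (hdq : d ≤ q) (u v : ℕ → H)
    (iu iv : ℕ → ι) (eu ev : ℕ → ℤ) :
    wordProd A B φ p u iu eu * wordProd A B φ q v iv ev =
      wordProd A B φ (p - d) u iu eu * midProd A B φ p u iu eu v iv ev d *
        gen A B φ (Sum.inl (v d)) * syllableProd A B φ d (q - d) v iv ev := by
  obtain ⟨p, rfl⟩ := Nat.exists_eq_add_of_le' hdp
  obtain ⟨q, rfl⟩ := Nat.exists_eq_add_of_le hdq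
  rw [wordProd_add, wordProd_add, wordProd_eq_prod_mul d v, midProd, syllableProd,
    Nat.add_sub_cancel, Nat.add_sub_cancel_left]
  simp only [mul_assoc]

theorem midProd_succ {p d : ℕ} (hd : d < p) (u v : ℕ → H) (iu iv : ℕ → ι) (eu ev : ℕ → ℤ) :
    midProd A B φ p u iu eu v iv ev (d + 1) =
      gen A B φ (Sum.inr (iu (p - (d + 1)))) ^ eu (p - (d + 1)) *
        gen A B φ (Sum.inl (u (p - d))) * midProd A B φ p u iu eu v iv ev d *
        (gen A B φ (Sum.inl (v d)) * gen A B φ (Sum.inr (iv d)) ^ ev d) := by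
  have hshift : ∀ k, p - (d + 1) + (k + 1) = p - d + k := fun k => by omega
  rw [midProd, midProd, List.prod_range_succ', List.prod_range_succ]
  simp only [hshift, add_zero, mul_assoc]

theorem wordProd_splice {m d ℓ : ℕ} {u v : ℕ → H} {iu iv : ℕ → ι} {eu ev : ℕ → ℤ} {x y : H}
    (hx : x = u m * y) :
    wordProd A B φ (m + ℓ)
      (fun k => if k < m then u k else if k = m then x else v (k - m + d))
      (fun k => if k < m then iu k else iv (k - m + d))
      (fun k => if k < m then eu k else ev (k - m + d)) =
    wordProd A B φ m u iu eu * gen A B φ (Sum.inl y) * syllableProd A B φ d ℓ v iv ev := by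
  have hhead : wordProd A B φ m u
      (fun k => if k < m then iu k else iv (k - m + d))
      (fun k => if k < m then eu k else ev (k - m + d)) = wordProd A B φ m u iu eu :=
    wordProd_congr (fun _ _ => rfl) (fun k hk => if_pos hk) (fun k hk => if_pos hk)
  have htail : syllableProd A B φ m ℓ
      (fun k => if k < m then u k else if k = m then x else v (k - m + d))
      (fun k => if k < m then iu k else iv (k - m + d))
      (fun k => if k < m then eu k else ev (k - m + d)) = syllableProd A B φ d ℓ v iv ev := by
    simp only [syllableProd]
    congr 2
    funext k
    have hk : m + k + 1 - m + d = d + k + 1 := by omega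
    simp only [show ¬(m + k < m) by omega, show ¬(m + k + 1 < m) by omega,
      show m + k + 1 ≠ m by omega, if_false, Nat.add_sub_cancel_left, hk, add_comm k d]
  rw [wordProd_add, htail,
    ← wordProd_mul_gen_inl (x := y) (fun k hk => if_pos hk) (by simp [hx]), hhead]

theorem ReducedWord.splice {p q m d : ℕ} {u v : ℕ → H} {iu iv : ℕ → ι} {eu ev : ℕ → ℤ}
    (hu : ReducedWord A B p u iu eu) (hv : ReducedWord A B q v iv ev) (hm : m ≤ p) (x : H)
    (hjunction : ∀ k, k + 1 = m → d < q → iu k = iv d → eu k = -ev d →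
      x ∉ side A B (iv d) (ev d)) :
    ReducedWord A B (m + (q - d))
      (fun k => if k < m then u k else if k = m then x else v (k - m + d))
      (fun k => if k < m then iu k else iv (k - m + d))
      (fun k => if k < m then eu k else ev (k - m + d)) := by
  refine ⟨fun k hk => ?_, fun k hk hidx he => ?_⟩
  · by_cases h : k < m
    · simpa only [if_pos h] using hu.1 k (by omega)
    · simpa only [if_neg h] using hv.1 (k - m + d) (by omega)
  rcases lt_trichotomy (k + 1) m with h | h | h
  · simp only [if_pos h, if_pos (show k < m by omega)] at hidx he ⊢
    exact hu.2 k (by omega) hidx he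
  · simp only [if_pos (show k < m by omega), h, lt_irrefl, if_false, if_true,
      Nat.sub_self, zero_add] at hidx he ⊢
    rw [hidx]
    exact hjunction k h (by omega) hidx he
  · have hk : k + 1 - m + d = k - m + d + 1 := by omega
    simp only [show ¬(k < m) by omega, show ¬(k + 1 < m) by omega,
      show k + 1 ≠ m by omega, if_false, hk] at hidx he ⊢
    exact hv.2 (k - m + d) (by omega) hidx he

theorem CancelCond.succ {p q d k : ℕ} {u v : ℕ → H} {iu iv : ℕ → ι} {eu ev : ℕ → ℤ} {c : H}
    (hk : k + 1 = p - d) (hdq : d < q)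
    (hc : midProd A B φ p u iu eu v iv ev d = gen A B φ (Sum.inl c))
    (hev : ev d = 1 ∨ ev d = -1) (hidx : iu k = iv d) (he : eu k = -ev d)
    (hmem : u (p - d) * c * v d ∈ side A B (iv d) (ev d)) :
    CancelCond A B φ p q u iu eu v iv ev (d + 1) := by
  obtain ⟨c', hc', hconj⟩ := exists_mem_side_neg_conj_eq A B φ hev hmem
  have hkp : p - (d + 1) = k := by omega
  refine Or.inr ⟨by omega, by omega, by omega, ?_, c', hc', ?_⟩
  · rw [Nat.add_sub_cancel, hkp, hidx, he]
  · rw [midProd_succ (by omega), hkp, hidx, he, hc, ← hconj, ← gen_inl_mul, ← gen_inl_mul]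
    simp only [mul_assoc]

end Words

/-- If `d = d(u,v)` is the largest `d` satisfying the cancellation
condition and `c = c(u,v)` is the corresponding connecting element, then
`u₀ t^{α_1} ⋯ t^{α_{p-d}} (u_{p-d} c v_d) t^{β_{d+1}} v_{d+1} ⋯ t^{β_q} v_q`
is a reduced word equal to `u v` in `G`. -/
theorem reduce_concat {H : Type*} [Group H] {ι : Type*}
    (A B : ι → Subgroup H) (φ : ∀ i, A i ≃* B i)
    (p q : ℕ) (u v : ℕ → H) (iu iv : ℕ → ι) (eu ev : ℕ → ℤ)
    (hu : ReducedWord A B p u iu eu) (hv : ReducedWord A B q v iv ev)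
    (d : ℕ) (hd : CancelCond A B φ p q u iu eu v iv ev d)
    (hmax : ∀ d', CancelCond A B φ p q u iu eu v iv ev d' → d' ≤ d)
    (c : H) (hc0 : d = 0 → c = 1)
    (hc1 : 1 ≤ d → c ∈ side A B (iv (d - 1)) (-(ev (d - 1))) ∧
        midProd A B φ p u iu eu v iv ev d = gen A B φ (Sum.inl c)) :
    ReducedWord A B ((p - d) + (q - d))
      (fun k => if k < p - d then u k else
        if k = p - d then u (p - d) * c * v d else v (k - (p - d) + d))
      (fun k => if k < p - d then iu k else iv (k - (p - d) + d))
      (fun k => if k < p - d then eu k else ev (k - (p - d) + d)) ∧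
    wordProd A B φ ((p - d) + (q - d))
      (fun k => if k < p - d then u k else
        if k = p - d then u (p - d) * c * v d else v (k - (p - d) + d))
      (fun k => if k < p - d then iu k else iv (k - (p - d) + d))
      (fun k => if k < p - d then eu k else ev (k - (p - d) + d)) =
    wordProd A B φ p u iu eu * wordProd A B φ q v iv ev := by
  obtain ⟨hdp, hdq⟩ : d ≤ p ∧ d ≤ q := by rcases hd with rfl | ⟨-, hp, hq, -⟩ <;> omega
  have hc : midProd A B φ p u iu eu v iv ev d = gen A B φ (Sum.inl c) := by
    rcases Nat.eq_zero_or_pos d with rfl | hd1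
    · simp [midProd, hc0 rfl, gen_inl_one]
    · exact (hc1 hd1).2
  refine ⟨hu.splice hv (Nat.sub_le p d) _ fun k hk hdq' hidx he hmem => ?_, ?_⟩
  · have := hmax (d + 1) (CancelCond.succ hk hdq' hc (hv.1 d hdq') hidx he hmem)
    omega
  · rw [wordProd_splice (y := c * v d) (mul_assoc _ _ _), wordProd_mul_wordProd hdp hdq, hc,
      ← gen_inl_mul]
    simp only [mul_assoc]
end

section
/- Let u = u₀ t_{i₁}^{α₁} u₁ ⋯ t_{i_ℓ}^{α_ℓ} u_ℓ and v = v₀ t_{j₁}^{β₁} v₁ ⋯ t_{j_m}^{β_m} v_m be reduced words. Suppose that for some k with 1 ≤ k ≤ min(ℓ,m) the word t_{i_{ℓ−k+1}}^{α_{ℓ−k+1}} u_{ℓ−k+1} ⋯ t_{i_ℓ}^{α_ℓ} u_ℓ v₀ t_{j₁}^{β₁} ⋯ v_{k−1} t_{j_k}^{β_k} represents in G an element of A_{i_{ℓ−k+1}}(α_{ℓ−k+1}) = A_{j_k}(−β_k). Then for every k′ with 1 ≤ k′ ≤ k one also has A_{i_{ℓ−k′+1}}(α_{ℓ−k′+1})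 = A_{j_{k′}}(−β_{k′}) and the word t_{i_{ℓ−k′+1}}^{α_{ℓ−k′+1}} u_{ℓ−k′+1} ⋯ t_{i_ℓ}^{α_ℓ} u_ℓ v₀ t_{j₁}^{β₁} ⋯ v_{k′−1} t_{j_{k′}}^{β_{k′}} represents in G an element of A_{j_{k′}}(−β_{k′}). -/
/-!
Induction on `k'`. Suppose the middle word of length `j < k` equals some `c ∈ H`. Then the middle
word of length `k`, multiplied on the right by `v_k`, is `P · t^α (u c v) t^β · Q`, where
`P · t^α u` and `t^β · Q` are segments of the reduced words `u` and `v`. It lies in `H`, so by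
Britton's lemma the only possible reduction, `t^α (u c v) t^β`, must be a pinch; this is the
claim for `j + 1`.

Britton's lemma is proved as for Mathlib's `HNNExtension`: `G` acts on normal words (with respect
to chosen right transversals of the associated subgroups), and a reduced word acts on the empty
normal word without any cancellation.
-/

def segmentProd {G : Type*} [Monoid G] (f : ℕ → G) (b n : ℕ) : G :=
  ((List.range n).map fun s => f (b + s)).prod

section segmentProd

variable {G : Type*} [Monoid G] (f g : ℕ → G)

theorem segmentProd_add (b n₁ n₂ : ℕ) :
    segmentProd f b (n₁ + n₂) = segmentProd f b n₁ * segmentProd f (b + n₁) n₂ := by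
  simp [segmentProd, List.range_add, Function.comp_def, add_assoc]

@[simp]
theorem segmentProd_one (b : ℕ) : segmentProd f b 1 = f b := by
  simp [segmentProd]

theorem segmentProd_mul_shift (b n : ℕ) :
    segmentProd (fun s => f s * g s) b n * f (b + n) =
      f b * segmentProd (fun s => g s * f (s + 1)) b n := by
  induction n with
  | zero => simp [segmentProd]
  | succ n ih =>
    rw [segmentProd_add, segmentProd_add, segmentProd_one, segmentProd_one, ← mul_assoc (f b),
      ← ih]
    simp only [mul_assoc, add_assoc]

end segmentProd

namespace MHNN

open Subgroup

/-! A letter `(i, u) : ι × ℤˣ` stands for `tᵢ ^ u`, a syllable `(ε, g)` for `tPow ε * of g`. -/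

def invLetter {ι : Type*} (ε : ι × ℤˣ) : ι × ℤˣ := (ε.1, -ε.2)

@[simp]
theorem invLetter_invLetter {ι : Type*} (ε : ι × ℤˣ) : invLetter (invLetter ε) = ε := by
  simp [invLetter]

def toUnit (e : ℤ) : ℤˣ := if e = 1 then 1 else -1

theorem coe_toUnit {e : ℤ} (he : e = 1 ∨ e = -1) : (toUnit e : ℤ) = e := by
  rcases he with rfl | rfl <;> simp [toUnit]

def letters {H ι : Type*} (w : ℕ → H) (idx : ℕ → ι) (e : ℕ → ℤ) (b n : ℕ) :
    List ((ι × ℤˣ) × H) :=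
  (List.range n).map fun s => ((idx (b + s), toUnit (e (b + s))), w (b + s + 1))

theorem letters_succ {H ι : Type*} (w : ℕ → H) (idx : ℕ → ι) (e : ℕ → ℤ) (b n : ℕ) :
    letters w idx e b (n + 1) =
      letters w idx e b n ++ [((idx (b + n), toUnit (e (b + n))), w (b + n + 1))] := by
  simp [letters, List.range_succ]

variable {H : Type*} [Group H] {ι : Type*} {A B : ι → Subgroup H} (φ : ∀ i, A i ≃* B i)

def of : H →* MHNN A B φ :=
  MonoidHom.mk' (fun h => gen A B φ (.inl h)) fun h₁ h₂ =>
    (eq_of_mul_inv_eq_one (PresentedGroup.one_of_mem (Or.inl ⟨h₁, h₂, rfl⟩))).symm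

def t (i : ι) : MHNN A B φ := gen A B φ (.inr i)

theorem inv_t_mul_of_mul_t (i : ι) (a : A i) :
    (t φ i)⁻¹ * of φ a * t φ i = of φ (φ i a) :=
  eq_of_mul_inv_eq_one (PresentedGroup.one_of_mem (Or.inr ⟨i, a, rfl⟩))

def tPow (ε : ι × ℤˣ) : MHNN A B φ := t φ ε.1 ^ (ε.2 : ℤ)

theorem tPow_invLetter (ε : ι × ℤˣ) : tPow φ (invLetter ε) = (tPow φ ε)⁻¹ := by
  simp [tPow, invLetter, zpow_neg]

variable (A B) in
/-- The subgroup `S` with `tᵢ ^ u * S * tᵢ ^ (-u) ⊆ H` for the letter `(i, u)`: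
`Bᵢ` for `u = 1` and `Aᵢ` for `u = -1`. -/
def letterSub (ε : ι × ℤˣ) : Subgroup H := HNNExtension.toSubgroup (B ε.1) (A ε.1) ε.2

def letterEquiv (ε : ι × ℤˣ) : letterSub A B ε ≃* letterSub A B (invLetter ε) :=
  HNNExtension.toSubgroupEquiv (φ ε.1).symm ε.2

@[simp]
theorem letterEquiv_invLetter_apply (ε : ι × ℤˣ) (s : letterSub A B ε) :
    (letterEquiv φ (invLetter ε) (letterEquiv φ ε s) : H) = s :=
  HNNExtension.toSubgroupEquiv_neg_apply _ _ s

theorem tPow_mul_of (ε : ι × ℤˣ) (s : letterSub A B ε) :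
    tPow φ ε * of φ s = of φ (letterEquiv φ ε s) * tPow φ ε := by
  obtain ⟨i, u⟩ := ε
  rcases Int.units_eq_one_or u with rfl | rfl
  · have h := inv_t_mul_of_mul_t φ i ((φ i).symm s)
    rw [show ((φ i ((φ i).symm s) : B i) : H) = s from
      congrArg Subtype.val ((φ i).apply_symm_apply s)] at h
    change t φ i ^ (1 : ℤ) * of φ s = of φ ((φ i).symm s) * t φ i ^ (1 : ℤ)
    rw [← h]
    group
  · change (t φ i) ^ (-1 : ℤ) * of φ s = of φ (φ i s) * t φ i ^ (-1 : ℤ)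
    rw [← inv_t_mul_of_mul_t φ i s]
    group

variable (A B) in
/-- The syllables `(ε, g)`, `y` do not form a pinch `tPow ε * of g * tPow (invLetter ε)` with
`g ∈ letterSub A B ε`. -/
def NoPinch (x y : (ι × ℤˣ) × H) : Prop := x.2 ∈ letterSub A B x.1 → y.1 ≠ invLetter x.1

variable (A B) in
structure Transversal where
  set : ι × ℤˣ → Set H
  compl : ∀ ε, IsComplement (letterSub A B ε : Set H) (set ε)

theorem Transversal.nonempty : Nonempty (Transversal A B) := by
  choose T hT using fun ε => (letterSub A B ε).exists_isComplement_right 1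
  exact ⟨⟨T, fun ε => (hT ε).1⟩⟩

/-- `⟨g, [(ε₁, g₁), …, (εₙ, gₙ)], _, _⟩` stands for `of g * tPow ε₁ * of g₁ * ⋯ * tPow εₙ * of gₙ`,
with each `gᵢ` taken from the transversal `d.set εᵢ`. -/
@[ext]
structure NormalWord (d : Transversal A B) where
  head : H
  toList : List ((ι × ℤˣ) × H)
  isChain : toList.IsChain (NoPinch A B)
  mem_set : ∀ x ∈ toList, x.2 ∈ d.set x.1

namespace NormalWord

variable {d : Transversal A B}

def empty : NormalWord d := ⟨1, [], .nil, by simp⟩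

instance : MulAction H (NormalWord d) where
  smul g w := { w with head := g * w.head }
  one_smul w := by ext <;> simp [HSMul.hSMul]
  mul_smul g₁ g₂ w := by ext <;> simp [HSMul.hSMul, mul_assoc]

@[simp] theorem smul_head (g : H) (w : NormalWord d) : (g • w).head = g * w.head := rfl

@[simp] theorem smul_toList (g : H) (w : NormalWord d) : (g • w).toList = w.toList := rfl

def Cancels (ε : ι × ℤˣ) (w : NormalWord d) : Prop :=
  w.head ∈ letterSub A B ε ∧ w.toList.head?.map Prod.fst = some (invLetter ε)

def cancelFirst (ε : ι × ℤˣ) (w : NormalWord d) (h : w.head ∈ letterSub A B ε) :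
    NormalWord d where
  head := letterEquiv φ ε ⟨w.head, h⟩ * (w.toList.head?.map Prod.snd).getD 1
  toList := w.toList.tail
  isChain := w.isChain.tail
  mem_set x hx := w.mem_set x (List.mem_of_mem_tail hx)

noncomputable def pushLetter (ε : ι × ℤˣ) (w : NormalWord d) (h : ¬ Cancels ε w) :
    NormalWord d where
  head := letterEquiv φ ε ((d.compl ε).equiv w.head).1
  toList := (ε, ((d.compl ε).equiv w.head).2) :: w.toList
  isChain := w.isChain.cons fun y hy hs hy1 => h ⟨by
      rw [← (d.compl ε).equiv_fst_mul_equiv_snd w.head]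
      exact mul_mem ((d.compl ε).equiv w.head).1.2 hs, by
      rw [Option.mem_def.1 hy]; exact congrArg some hy1⟩
  mem_set := by
    rintro x (_ | ⟨_, hx⟩)
    · exact ((d.compl ε).equiv w.head).2.2
    · exact w.mem_set x hx

open scoped Classical in
/-- The action of `tPow ε` on normal words. -/
noncomputable def letterSMul (ε : ι × ℤˣ) (w : NormalWord d) : NormalWord d :=
  if h : Cancels ε w then cancelFirst φ ε w h.1 else pushLetter φ ε w h

theorem cancels_pushLetter (ε : ι × ℤˣ) (w : NormalWord d) (h : ¬ Cancels ε w) :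
    Cancels (invLetter ε) (pushLetter φ ε w h) :=
  ⟨(letterEquiv φ ε _).2, by simp [pushLetter]⟩

theorem not_cancels_cancelFirst (ε : ι × ℤˣ) (w : NormalWord d) (h : Cancels ε w) :
    ¬ Cancels (invLetter ε) (cancelFirst φ ε w h.1) := by
  obtain ⟨g, _ | ⟨⟨ε', s⟩, L⟩, hc, hm⟩ := w
  · simp [Cancels] at h
  obtain rfl : ε' = invLetter ε := by simpa [Cancels] using h.2
  rintro ⟨hs, hL⟩
  have hs : s ∈ letterSub A B (invLetter ε) := by
    simpa [cancelFirst, mul_mem_cancel_left (letterEquiv φ ε _).2] using hs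
  obtain ⟨y, hy, rfl⟩ : ∃ y ∈ L.head?, y.1 = ε := by simpa [cancelFirst] using hL
  exact (List.isChain_cons.1 hc).1 y hy hs (by simp)

theorem cancelFirst_pushLetter (ε : ι × ℤˣ) (w : NormalWord d) (h : ¬ Cancels ε w) :
    cancelFirst φ (invLetter ε) (pushLetter φ ε w h) (cancels_pushLetter φ ε w h).1 = w := by
  ext1
  · simpa [cancelFirst, pushLetter] using (d.compl ε).equiv_fst_mul_equiv_snd w.head
  · simp [cancelFirst, pushLetter]

theorem pushLetter_cancelFirst (ε : ι × ℤˣ) (w : NormalWord d) (h : Cancels ε w) :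
    pushLetter φ (invLetter ε) (cancelFirst φ ε w h.1) (not_cancels_cancelFirst φ ε w h) =
      w := by
  obtain ⟨g, _ | ⟨⟨ε', s⟩, L⟩, hc, hm⟩ := w
  · simp [Cancels] at h
  obtain rfl : ε' = invLetter ε := by simpa [Cancels] using h.2
  have hsplit : (d.compl (invLetter ε)).equiv (letterEquiv φ ε ⟨g, h.1⟩ * s) =
      (⟨_, (letterEquiv φ ε ⟨g, h.1⟩).2⟩, ⟨s, hm _ List.mem_cons_self⟩) :=
    (Equiv.eq_symm_apply _).1 rfl
  ext1 <;> simp [cancelFirst, pushLetter, hsplit]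

theorem letterSMul_of_cancels {ε : ι × ℤˣ} {w : NormalWord d} (h : Cancels ε w) :
    letterSMul φ ε w = cancelFirst φ ε w h.1 :=
  dif_pos h

theorem letterSMul_of_not_cancels {ε : ι × ℤˣ} {w : NormalWord d} (h : ¬ Cancels ε w) :
    letterSMul φ ε w = pushLetter φ ε w h :=
  dif_neg h

theorem letterSMul_invLetter_letterSMul (ε : ι × ℤˣ) (w : NormalWord d) :
    letterSMul φ (invLetter ε) (letterSMul φ ε w) = w := by
  by_cases h : Cancels ε w
  · rw [letterSMul_of_cancels φ h,
      letterSMul_of_not_cancels φ (not_cancels_cancelFirst φ ε w h),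
      pushLetter_cancelFirst φ ε w h]
  · rw [letterSMul_of_not_cancels φ h,
      letterSMul_of_cancels φ (cancels_pushLetter φ ε w h), cancelFirst_pushLetter]

theorem letterSMul_smul (ε : ι × ℤˣ) (s : letterSub A B ε) (w : NormalWord d) :
    letterSMul φ ε ((s : H) • w) = (letterEquiv φ ε s : H) • letterSMul φ ε w := by
  have hcancels : Cancels ε ((s : H) • w) ↔ Cancels ε w := by
    simp [Cancels, mul_mem_cancel_left s.2]
  by_cases h : Cancels ε w
  · rw [letterSMul_of_cancels φ (hcancels.2 h), letterSMul_of_cancels φ h]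
    have : (⟨s * w.head, (hcancels.2 h).1⟩ : letterSub A B ε) = s * ⟨w.head, h.1⟩ := rfl
    ext1 <;> simp [cancelFirst, this, mul_assoc]
  · rw [letterSMul_of_not_cancels φ (mt hcancels.1 h), letterSMul_of_not_cancels φ h]
    ext1 <;> simp [pushLetter, (d.compl ε).equiv_mul_left_of_mem s.2]

noncomputable def letterPerm (ε : ι × ℤˣ) : Equiv.Perm (NormalWord d) where
  toFun := letterSMul φ ε
  invFun := letterSMul φ (invLetter ε)
  left_inv := letterSMul_invLetter_letterSMul φ ε
  right_inv w := by simpa using letterSMul_invLetter_letterSMul φ (invLetter ε) w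

end NormalWord

open NormalWord

variable (d : Transversal A B)

noncomputable def genPerm : H ⊕ ι → Equiv.Perm (NormalWord d)
  | .inl h => MulAction.toPerm h
  | .inr i => letterPerm φ (i, 1)

theorem lift_genPerm_eq_one : ∀ r ∈ hnnRels A B φ, FreeGroup.lift (genPerm φ d) r = 1 := by
  rintro r (⟨h₁, h₂, rfl⟩ | ⟨i, a, rfl⟩)
  · ext1 w
    simp [genPerm, mul_smul]
  · have hcomm : genPerm φ d (.inl a) * genPerm φ d (.inr i) =
        genPerm φ d (.inr i) * genPerm φ d (.inl (φ i a)) := by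
      ext1 w
      have := letterSMul_smul φ (i, 1) (φ i a) w
      simp only [genPerm, Equiv.Perm.mul_apply, MulAction.toPerm_apply, letterPerm,
        Equiv.coe_fn_mk, this]
      congr
      exact ((φ i).symm_apply_apply a).symm
    simp only [map_mul, map_inv, FreeGroup.lift_apply_of]
    rw [mul_inv_eq_one, mul_assoc, hcomm, inv_mul_cancel_left]

noncomputable def toPerm : MHNN A B φ →* Equiv.Perm (NormalWord d) :=
  PresentedGroup.toGroup (lift_genPerm_eq_one φ d)

theorem toPerm_of (g : H) (w : NormalWord d) : toPerm φ d (of φ g) w = g • w := by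
  have hgen : toPerm φ d (of φ g) = MulAction.toPerm g := PresentedGroup.toGroup.of _
  rw [hgen]
  rfl

theorem toPerm_tPow (ε : ι × ℤˣ) (w : NormalWord d) :
    toPerm φ d (tPow φ ε) w = letterSMul φ ε w := by
  obtain ⟨i, u⟩ := ε
  have hgen : toPerm φ d (t φ i) = letterPerm φ (i, 1) := PresentedGroup.toGroup.of _
  rcases Int.units_eq_one_or u with rfl | rfl
  · simp [tPow, hgen, letterPerm]
  · simp [tPow, hgen, letterPerm, Equiv.Perm.inv_def, invLetter]

def letterProd (L : List ((ι × ℤˣ) × H)) : MHNN A B φ :=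
  (L.map fun x => tPow φ x.1 * of φ x.2).prod

/-- Acting on the empty word, no syllable of a reduced product ever cancels. -/
theorem toPerm_letterProd_empty {L : List ((ι × ℤˣ) × H)} (hL : L.IsChain (NoPinch A B)) :
    (toPerm φ d (letterProd φ L) empty).toList.map Prod.fst = L.map Prod.fst ∧
      ∀ ε ∈ L.head?.map Prod.fst,
        (toPerm φ d (letterProd φ L) empty).head ∈ letterSub A B (invLetter ε) := by
  induction L with
  | nil => simp [letterProd, empty]
  | cons x L ih =>
    obtain ⟨ihL, ihh⟩ := ih hL.tail
    set w := toPerm φ d (letterProd φ L) empty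
    have hx : toPerm φ d (letterProd φ (x :: L)) empty = letterSMul φ x.1 (x.2 • w) := by
      simp [w, letterProd, mul_assoc, toPerm_tPow, toPerm_of]
    have hnc : ¬ Cancels x.1 (x.2 • w) := by
      rintro ⟨hhead, hfirst⟩
      obtain ⟨y, hy, hy1⟩ : ∃ y ∈ L.head?, y.1 = invLetter x.1 := by
        rw [smul_toList, ← List.head?_map, ihL, List.head?_map] at hfirst
        simpa using hfirst
      have hw : w.head ∈ letterSub A B x.1 := by
        simpa [hy1] using ihh y.1 (Option.mem_map_of_mem _ hy)
      exact (List.isChain_cons.1 hL).1 y hy ((mul_mem_cancel_right hw).1 hhead) hy1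
    rw [hx, letterSMul_of_not_cancels φ hnc]
    refine ⟨by simp [pushLetter, ihL], ?_⟩
    rintro ε ⟨⟩
    exact (letterEquiv φ x.1 _).2

/-- Britton's lemma. -/
theorem eq_nil_of_letterProd_mem_range {L : List ((ι × ℤˣ) × H)}
    (hL : L.IsChain (NoPinch A B)) (h : letterProd φ L ∈ (of φ).range) : L = [] := by
  obtain ⟨d⟩ := Transversal.nonempty (A := A) (B := B)
  obtain ⟨g, hg⟩ := h
  have := (toPerm_letterProd_empty φ d hL).1
  rw [← hg, toPerm_of] at this
  exact List.map_eq_nil_iff.1 this.symm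

theorem pinch_of_mem_range {L₁ L₂ : List ((ι × ℤˣ) × H)} {ε : ι × ℤˣ} {h g : H}
    (h₁ : (L₁ ++ [(ε, h)]).IsChain (NoPinch A B)) (h₂ : L₂.IsChain (NoPinch A B))
    (hmem : letterProd φ (L₁ ++ [(ε, h)]) * of φ g * letterProd φ L₂ ∈ (of φ).range) :
    h * g ∈ letterSub A B ε ∧ L₂.head?.map Prod.fst = some (invLetter ε) := by
  by_contra hpinch
  have hchain : (L₁ ++ [(ε, h * g)] ++ L₂).IsChain (NoPinch A B) := by
    refine .append ?_ h₂ ?_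
    · rw [List.isChain_append] at h₁ ⊢
      simpa [NoPinch] using h₁
    · simp only [List.getLast?_append, List.getLast?_singleton, Option.mem_def]
      rintro _ ⟨⟩ y hy hhg hy1
      exact hpinch ⟨hhg, by rw [Option.mem_def.1 hy]; exact congrArg some hy1⟩
  have hprod : letterProd φ (L₁ ++ [(ε, h * g)] ++ L₂) =
      letterProd φ (L₁ ++ [(ε, h)]) * of φ g * letterProd φ L₂ := by
    simp [letterProd, mul_assoc]
  simpa using eq_nil_of_letterProd_mem_range φ hchain (hprod ▸ hmem)

def stableMul (w : ℕ → H) (idx : ℕ → ι) (e : ℕ → ℤ) (s : ℕ) : MHNN A B φ :=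
  t φ (idx s) ^ e s * of φ (w (s + 1))

def mulStable (w : ℕ → H) (idx : ℕ → ι) (e : ℕ → ℤ) (s : ℕ) : MHNN A B φ :=
  of φ (w s) * t φ (idx s) ^ e s

variable {p : ℕ} {u v : ℕ → H} {iu iv : ℕ → ι} {eu ev : ℕ → ℤ}

theorem midProd_eq_segmentProd (d : ℕ) :
    midProd A B φ p u iu eu v iv ev d =
      segmentProd (stableMul φ u iu eu) (p - d) d * segmentProd (mulStable φ v iv ev) 0 d := by
  simp [midProd, segmentProd, stableMul, mulStable, of, t]

theorem midProd_add {d e : ℕ} (h : d + e ≤ p) :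
    midProd A B φ p u iu eu v iv ev (d + e) =
      segmentProd (stableMul φ u iu eu) (p - (d + e)) e * midProd A B φ p u iu eu v iv ev d *
        segmentProd (mulStable φ v iv ev) d e := by
  have hsplit : segmentProd (stableMul φ u iu eu) (p - (d + e)) (d + e) =
      segmentProd (stableMul φ u iu eu) (p - (d + e)) e *
        segmentProd (stableMul φ u iu eu) (p - d) d := by
    rw [add_comm d e, segmentProd_add, show p - (e + d) + e = p - d by omega]
  rw [midProd_eq_segmentProd, midProd_eq_segmentProd, hsplit, segmentProd_add _ 0 d e, zero_add]
  simp only [mul_assoc]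

theorem tPow_toUnit (i : ι) {e : ℤ} (he : e = 1 ∨ e = -1) :
    tPow φ (i, toUnit e) = t φ i ^ e := by
  rw [tPow, coe_toUnit he]

theorem letterSub_toUnit (i : ι) {e : ℤ} (he : e = 1 ∨ e = -1) :
    letterSub A B (i, toUnit e) = side A B i (-e) := by
  rcases he with rfl | rfl <;> simp [toUnit, letterSub, side]

theorem letterSub_invLetter_toUnit (i : ι) {e : ℤ} (he : e = 1 ∨ e = -1) :
    letterSub A B (invLetter (i, toUnit e)) = side A B i e := by
  rcases he with rfl | rfl <;> simp [toUnit, letterSub, side, invLetter]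

theorem letterProd_letters {w : ℕ → H} {idx : ℕ → ι} {e : ℕ → ℤ} {b n : ℕ}
    (he : ∀ s < n, e (b + s) = 1 ∨ e (b + s) = -1) :
    letterProd φ (letters w idx e b n) = segmentProd (stableMul φ w idx e) b n := by
  simp only [letterProd, letters, segmentProd, List.map_map]
  refine congrArg List.prod (List.map_congr_left fun s hs => ?_)
  simp [stableMul, tPow_toUnit φ _ (he s (List.mem_range.1 hs))]

theorem isChain_letters {ℓ b n : ℕ} {w : ℕ → H} {idx : ℕ → ι} {e : ℕ → ℤ}
    (hw : ReducedWord A B ℓ w idx e) (h : b + n ≤ ℓ) :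
    (letters w idx e b n).IsChain (NoPinch A B) := by
  rw [letters, List.isChain_map, List.isChain_range]
  intro s hs hmem heq
  simp only [invLetter, Prod.mk.injEq] at heq
  have he₁ := hw.1 (b + s) (by omega)
  have he₂ := hw.1 (b + (s + 1)) (by omega)
  have hneg : e (b + s) = -e (b + (s + 1)) := by
    have := congrArg (fun x : ℤˣ => (x : ℤ)) heq.2
    simp only [Units.val_neg, coe_toUnit he₁, coe_toUnit he₂] at this
    omega
  refine hw.2 (b + s) (by omega) heq.1.symm hneg ?_
  rw [letterSub_toUnit _ he₁, hneg, neg_neg] at hmem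
  exact hmem

theorem midProd_mul_of_eq_letterProd {ℓ m j n : ℕ} (hu : ReducedWord A B ℓ u iu eu)
    (hv : ReducedWord A B m v iv ev) (hl : j + (n + 1) ≤ ℓ) (hm : j + (n + 1) ≤ m) :
    midProd A B φ ℓ u iu eu v iv ev (j + (n + 1)) * of φ (v (j + (n + 1))) =
      letterProd φ (letters u iu eu (ℓ - (j + (n + 1))) (n + 1)) *
        midProd A B φ ℓ u iu eu v iv ev j * of φ (v j) *
        letterProd φ (letters v iv ev j (n + 1)) := by
  have hshift : segmentProd (mulStable φ v iv ev) j (n + 1) * of φ (v (j + (n + 1))) =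
      of φ (v j) * segmentProd (stableMul φ v iv ev) j (n + 1) :=
    segmentProd_mul_shift (fun s => of φ (v s)) (fun s => t φ (iv s) ^ ev s) j (n + 1)
  rw [midProd_add φ hl, letterProd_letters φ fun s hs => hu.1 _ (by omega),
    letterProd_letters φ fun s hs => hv.1 _ (by omega), mul_assoc _ _ (of φ _), hshift]
  simp only [mul_assoc]

theorem midProd_junction_pinch {ℓ m j k : ℕ} (hu : ReducedWord A B ℓ u iu eu)
    (hv : ReducedWord A B m v iv ev) (hjk : j < k) (hkl : k ≤ ℓ) (hkm : k ≤ m)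
    (hk : midProd A B φ ℓ u iu eu v iv ev k ∈ (of φ).range) {c : H}
    (hc : of φ c = midProd A B φ ℓ u iu eu v iv ev j) :
    iv j = iu (ℓ - (j + 1)) ∧ ev j = -eu (ℓ - (j + 1)) ∧
      u (ℓ - (j + 1) + 1) * (c * v j) ∈ side A B (iu (ℓ - (j + 1))) (-eu (ℓ - (j + 1))) := by
  obtain ⟨n, rfl⟩ : ∃ n, k = j + (n + 1) := ⟨k - j - 1, by omega⟩
  obtain ⟨c₀, hc₀⟩ := hk
  have ha : ℓ - (j + (n + 1)) + n = ℓ - (j + 1) := by omega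
  have heu := hu.1 (ℓ - (j + 1)) (by omega)
  have hev := hv.1 j (by omega)
  have hchain := isChain_letters (b := ℓ - (j + (n + 1))) (n := n + 1) hu (by omega)
  have hword := midProd_mul_of_eq_letterProd φ hu hv hkl hkm
  rw [letters_succ, ha] at hchain hword
  rw [← hc, mul_assoc _ (of φ c), ← map_mul] at hword
  generalize ℓ - (j + 1) = a at *
  obtain ⟨hx, hfirst⟩ := pinch_of_mem_range φ (g := c * v j) hchain (isChain_letters hv hkm)
    ⟨c₀ * v (j + (n + 1)), by rw [map_mul, hc₀, hword]⟩
  obtain ⟨hi, he⟩ : iv j = iu a ∧ toUnit (ev j) = -toUnit (eu a) := by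
    simpa [letters, List.head?_range, invLetter] using hfirst
  rw [letterSub_toUnit (A := A) (B := B) _ heu] at hx
  refine ⟨hi, ?_, hx⟩
  simpa [coe_toUnit hev, coe_toUnit heu] using congrArg (fun x : ℤˣ => (x : ℤ)) he

theorem midProd_succ_of_mem_range {ℓ m j k : ℕ} (hu : ReducedWord A B ℓ u iu eu)
    (hv : ReducedWord A B m v iv ev) (hjk : j < k) (hkl : k ≤ ℓ) (hkm : k ≤ m)
    (hk : midProd A B φ ℓ u iu eu v iv ev k ∈ (of φ).range)
    (hj : midProd A B φ ℓ u iu eu v iv ev j ∈ (of φ).range) :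
    side A B (iu (ℓ - (j + 1))) (eu (ℓ - (j + 1))) = side A B (iv j) (-ev j) ∧
      ∃ c ∈ side A B (iv j) (-ev j), midProd A B φ ℓ u iu eu v iv ev (j + 1) = of φ c := by
  obtain ⟨c, hc⟩ := hj
  obtain ⟨hi, hneg, hx⟩ := midProd_junction_pinch φ hu hv hjk hkl hkm hk hc
  have hmid := midProd_add φ (p := ℓ) (d := j) (e := 1) (u := u) (iu := iu) (eu := eu) (v := v)
    (iv := iv) (ev := ev) (by omega)
  have heu := hu.1 (ℓ - (j + 1)) (by omega)
  rw [hi, hneg, neg_neg]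
  generalize ℓ - (j + 1) = a at *
  set ε : ι × ℤˣ := (iu a, toUnit (eu a))
  rw [← letterSub_toUnit _ heu] at hx
  refine ⟨rfl, letterEquiv φ ε ⟨_, hx⟩, ?_, ?_⟩
  · rw [← letterSub_invLetter_toUnit _ heu]
    exact (letterEquiv φ ε _).2
  have hε : tPow φ ε = t φ (iu a) ^ eu a := tPow_toUnit φ _ heu
  rw [hmid, segmentProd_one, segmentProd_one, stableMul, mulStable, ← hc, hi, hneg, zpow_neg,
    ← hε, ← tPow_invLetter]
  calc tPow φ ε * of φ (u (a + 1)) * of φ c * (of φ (v j) * tPow φ (invLetter ε))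
      = tPow φ ε * of φ (u (a + 1) * (c * v j)) * tPow φ (invLetter ε) := by
        simp only [map_mul, mul_assoc]
    _ = _ := by rw [tPow_mul_of φ ε ⟨_, hx⟩, tPow_invLetter, mul_inv_cancel_right]

end MHNN

theorem cancel_monotone_general {H : Type*} [Group H] {ι : Type*}
    (A B : ι → Subgroup H) (φ : ∀ i, A i ≃* B i)
    (ℓ m : ℕ) (u v : ℕ → H) (iu iv : ℕ → ι) (eu ev : ℕ → ℤ)
    (hu : ReducedWord A B ℓ u iu eu) (hv : ReducedWord A B m v iv ev)
    (k : ℕ) (hkl : k ≤ ℓ) (hkm : k ≤ m)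
    (hmem : ∃ c ∈ side A B (iv (k - 1)) (-(ev (k - 1))),
        midProd A B φ ℓ u iu eu v iv ev k = gen A B φ (Sum.inl c)) :
    ∀ k', 1 ≤ k' → k' ≤ k →
      side A B (iu (ℓ - k')) (eu (ℓ - k')) = side A B (iv (k' - 1)) (-(ev (k' - 1))) ∧
      ∃ c ∈ side A B (iv (k' - 1)) (-(ev (k' - 1))),
        midProd A B φ ℓ u iu eu v iv ev k' = gen A B φ (Sum.inl c) := by
  obtain ⟨c, -, hc⟩ := hmem
  have hk : midProd A B φ ℓ u iu eu v iv ev k ∈ (MHNN.of φ).range := ⟨c, hc.symm⟩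
  have hrange : ∀ j ≤ k, midProd A B φ ℓ u iu eu v iv ev j ∈ (MHNN.of φ).range := by
    intro j
    induction j with
    | zero => exact fun _ => ⟨1, by simp [midProd]⟩
    | succ j ih =>
      intro hj
      obtain ⟨-, c', -, hc'⟩ :=
        MHNN.midProd_succ_of_mem_range φ hu hv (by omega) hkl hkm hk (ih (by omega))
      exact ⟨c', hc'.symm⟩
  rintro k' hk' hk'k
  obtain ⟨j, rfl⟩ : ∃ j, k' = j + 1 := ⟨k' - 1, by omega⟩
  exact MHNN.midProd_succ_of_mem_range φ hu hv hk'k hkl hkm hk (hrange j (by omega))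

/-- If for some `1 ≤ k ≤ min(ℓ,m)` the middle word represents an element of
`A_{i_{ℓ−k+1}}(α_{ℓ−k+1}) = A_{j_k}(−β_k)` in `G`, then the same holds for every
`1 ≤ k' ≤ k`. -/
theorem cancel_monotone {H : Type*} [Group H] {ι : Type*}
    (A B : ι → Subgroup H) (φ : ∀ i, A i ≃* B i)
    (ℓ m : ℕ) (u v : ℕ → H) (iu iv : ℕ → ι) (eu ev : ℕ → ℤ)
    (hu : ReducedWord A B ℓ u iu eu) (hv : ReducedWord A B m v iv ev)
    (k : ℕ) (hk1 : 1 ≤ k) (hkl : k ≤ ℓ) (hkm : k ≤ m)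
    (hside : side A B (iu (ℓ - k)) (eu (ℓ - k)) = side A B (iv (k - 1)) (-(ev (k - 1))))
    (hmem : ∃ c ∈ side A B (iv (k - 1)) (-(ev (k - 1))),
        midProd A B φ ℓ u iu eu v iv ev k = gen A B φ (Sum.inl c)) :
    ∀ k', 1 ≤ k' → k' ≤ k →
      side A B (iu (ℓ - k')) (eu (ℓ - k')) = side A B (iv (k' - 1)) (-(ev (k' - 1))) ∧
      ∃ c ∈ side A B (iv (k' - 1)) (-(ev (k' - 1))),
        midProd A B φ ℓ u iu eu v iv ev k' = gen A B φ (Sum.inl c) :=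
  cancel_monotone_general A B φ ℓ m u v iu iv eu ev hu hv k hkl hkm hmem
end

section
/- In the free product F(W) * A₁ * B₁ one has A₁ ∩ N(ℰ) = 1 and B₁ ∩ N(ℰ) = 1, where N(ℰ) is the smallest normal subgroup of F(W) * A₁ * B₁ containing all elements (Z₁ c₁)(c₂ Z₂)^{−1} for relations (Z₁ c₁ = c₂ Z₂) ∈ ℰ. Consequently, A₁ and B₁ embed naturally into the quotient group (F(W) * A₁ * B₁)/N(ℰ). -/
/-!
The free product `F(W) ∗ A₁ ∗ B₁` of the free group on `W` with (abstract copies of) the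
finite subgroups `A₁, B₁ ≤ K`, together with the set of relations
`ℰ = {Z₁ c₁ = c₂ Z₂ | val(Z₁) c₁ = c₂ val(Z₂) in K}`.
-/

section

variable (K : Type*) [Group K] (A₁ B₁ : Subgroup K) (W : Type*)

/-- The free product `F(W) ∗ A₁ ∗ B₁` (with `A₁` and `B₁` as abstract groups,
so that they have trivial intersection in the free product). -/
abbrev FP := Monoid.Coprod (FreeGroup W) (Monoid.Coprod A₁ B₁)

/-- The canonical embedding of the generator `Z ∈ W` into `F(W) ∗ A₁ ∗ B₁`. -/
def embZ (Z : W) : FP K A₁ B₁ W := Monoid.Coprod.inl (FreeGroup.of Z)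

/-- The canonical embedding of `A₁` into `F(W) ∗ A₁ ∗ B₁`. -/
def embA : A₁ →* FP K A₁ B₁ W := Monoid.Coprod.inr.comp Monoid.Coprod.inl

/-- The canonical embedding of `B₁` into `F(W) ∗ A₁ ∗ B₁`. -/
def embB : B₁ →* FP K A₁ B₁ W := Monoid.Coprod.inr.comp Monoid.Coprod.inr

/-- A letter from `A₁ ∪ B₁` (tagged by which of the two copies it comes from),
embedded into `F(W) ∗ A₁ ∗ B₁`. -/
def embC : A₁ ⊕ B₁ → FP K A₁ B₁ W :=
  Sum.elim (fun a => embA K A₁ B₁ W a) (fun b => embB K A₁ B₁ W b)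

/-- The underlying element of `K` of a letter from `A₁ ∪ B₁`. -/
def kval : A₁ ⊕ B₁ → K := Sum.elim Subtype.val Subtype.val

/-- The relators of `ℰ`: one relator `(Z₁ c₁)(c₂ Z₂)⁻¹` for each
`Z₁, Z₂ ∈ W`, `c₁, c₂ ∈ A₁ ∪ B₁` with `val(Z₁) c₁ = c₂ val(Z₂)` in `K`. -/
def relSet (val : W → K) : Set (FP K A₁ B₁ W) :=
  {r | ∃ (Z₁ Z₂ : W) (c₁ c₂ : A₁ ⊕ B₁),
    val Z₁ * kval K A₁ B₁ c₁ = kval K A₁ B₁ c₂ * val Z₂ ∧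
    r = embZ K A₁ B₁ W Z₁ * embC K A₁ B₁ W c₁ *
        (embC K A₁ B₁ W c₂ * embZ K A₁ B₁ W Z₂)⁻¹}

/-- The evaluation homomorphism `F(W) ∗ A₁ ∗ B₁ →* K` sending `Z ↦ val Z` and
`A₁, B₁` to themselves via the inclusions. -/
def evalHom (val : W → K) : FP K A₁ B₁ W →* K :=
  Monoid.Coprod.lift (FreeGroup.lift val) (Monoid.Coprod.lift A₁.subtype B₁.subtype)

lemma evalHom_embA (val : W → K) (a : A₁) :
    evalHom K A₁ B₁ W val (embA K A₁ B₁ W a) = (a : K) := by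
  simp [evalHom, embA]

lemma evalHom_embB (val : W → K) (b : B₁) :
    evalHom K A₁ B₁ W val (embB K A₁ B₁ W b) = (b : K) := by
  simp [evalHom, embB]

lemma evalHom_embC (val : W → K) (c : A₁ ⊕ B₁) :
    evalHom K A₁ B₁ W val (embC K A₁ B₁ W c) = kval K A₁ B₁ c := by
  cases c <;> simp [embC, kval, evalHom_embA, evalHom_embB]

lemma evalHom_embZ (val : W → K) (Z : W) :
    evalHom K A₁ B₁ W val (embZ K A₁ B₁ W Z) = val Z := by
  simp [evalHom, embZ]

lemma normalClosure_le_ker (val : W → K) :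
    Subgroup.normalClosure (relSet K A₁ B₁ W val) ≤ (evalHom K A₁ B₁ W val).ker := by
  apply Subgroup.normalClosure_le_normal
  rintro r ⟨Z₁, Z₂, c₁, c₂, h, rfl⟩
  simp only [SetLike.mem_coe, MonoidHom.mem_ker, map_mul, map_inv,
    evalHom_embZ, evalHom_embC]
  rw [h]
  group

/-- In `F(W) ∗ A₁ ∗ B₁` one has `A₁ ∩ N(ℰ) = 1` and `B₁ ∩ N(ℰ) = 1`;
consequently `A₁` and `B₁` embed into the quotient `(F(W) ∗ A₁ ∗ B₁)/N(ℰ)`. -/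
theorem inf_normalClosure_eq_bot (val : W → K) :
    ((embA K A₁ B₁ W).range ⊓ Subgroup.normalClosure (relSet K A₁ B₁ W val) = ⊥) ∧
    ((embB K A₁ B₁ W).range ⊓ Subgroup.normalClosure (relSet K A₁ B₁ W val) = ⊥) ∧
    Function.Injective
      ((QuotientGroup.mk' (Subgroup.normalClosure (relSet K A₁ B₁ W val))).comp
        (embA K A₁ B₁ W)) ∧
    Function.Injective
      ((QuotientGroup.mk' (Subgroup.normalClosure (relSet K A₁ B₁ W val))).comp
        (embB K A₁ B₁ W)) := by
  have key : ∀ x ∈ Subgroup.normalClosure (relSet K A₁ B₁ W val),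
      evalHom K A₁ B₁ W val x = 1 := fun x hx => normalClosure_le_ker K A₁ B₁ W val hx
  have hA : (embA K A₁ B₁ W).range ⊓ Subgroup.normalClosure (relSet K A₁ B₁ W val) = ⊥ := by
    rw [eq_bot_iff]
    rintro x ⟨⟨a, rfl⟩, hx⟩
    have := key _ hx
    rw [evalHom_embA] at this
    have : a = 1 := Subtype.ext this
    simp [this]
  have hB : (embB K A₁ B₁ W).range ⊓ Subgroup.normalClosure (relSet K A₁ B₁ W val) = ⊥ := by
    rw [eq_bot_iff]
    rintro x ⟨⟨b, rfl⟩, hx⟩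
    have := key _ hx
    rw [evalHom_embB] at this
    have : b = 1 := Subtype.ext this
    simp [this]
  refine ⟨hA, hB, ?_, ?_⟩
  · intro a b h
    simp only [MonoidHom.comp_apply, QuotientGroup.mk'_apply, QuotientGroup.eq] at h
    have := key _ h
    rw [map_mul, map_inv, evalHom_embA, evalHom_embA, inv_mul_eq_one] at this
    exact Subtype.ext this
  · intro a b h
    simp only [MonoidHom.comp_apply, QuotientGroup.mk'_apply, QuotientGroup.eq] at h
    have := key _ h
    rw [map_mul, map_inv, evalHom_embB, evalHom_embB, inv_mul_eq_one] at this
    exact Subtype.ext this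

end
end

section
/- Suppose the word u₀ t^{α₁} u₁ ⋯ t^{αₘ} uₘ, where u_k = val(X_k) for symbols X₀,…,Xₘ ∈ W, is reduced with respect to the HNN-extension G₀ = ⟨K, t | t^{−1} a t = φ₁(a) (a ∈ A₁)⟩ (i.e., it contains no factor t^{−1} u_k t with u_k ∈ A₁ in K and no factor t u_k t^{−1} with u_k ∈ B₁ in K). Then the symbolic word X₀ t^{α₁} X₁ ⋯ t^{αₘ} Xₘ is reduced with respect to the HNN-extension G₁ = ⟨(F(W) * A₁ * B₁)/N(ℰ), t | t^{−1} a t = φ₁(a) (a ∈ A₁)⟩, i.e., it contains no factor t^{−1} X_k t with the image of X_k in (F(W) * A₁ * B₁)/N(ℰ) lying in A₁, and no factor t X_k t^{−1} with that image lying in B₁. -/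
/-!
The free product `F(W) ∗ A₁ ∗ B₁` of the free group on `W` with (abstract copies of) the
finite subgroups `A₁, B₁ ≤ K`, together with the set of relations
`ℰ = {Z₁ c₁ = c₂ Z₂ | val(Z₁) c₁ = c₂ val(Z₂) in K}`.
-/

section

variable (K : Type*) [Group K] (A₁ B₁ : Subgroup K) (W : Type*)

/-- If the word `val(X₀) t^{α₁} val(X₁) ⋯ t^{αₘ} val(Xₘ)` is reduced with
respect to `G₀ = ⟨K, t | t⁻¹ a t = φ₁(a) (a ∈ A₁)⟩` (no factor `t⁻¹ u t` with `u ∈ A₁` and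
no factor `t u t⁻¹` with `u ∈ B₁`), then the symbolic word `X₀ t^{α₁} X₁ ⋯ t^{αₘ} Xₘ` is
reduced with respect to `G₁ = ⟨(F(W) ∗ A₁ ∗ B₁)/N(ℰ), t | t⁻¹ a t = φ₁(a) (a ∈ A₁)⟩`:
no factor `t⁻¹ X t` with the image of `X` in the quotient lying in (the image of) `A₁` and
no factor `t X t⁻¹` with that image lying in (the image of) `B₁`. -/
theorem symbolic_word_reduced (val : W → K) (φ₁ : A₁ ≃* B₁)
    (m : ℕ) (X : ℕ → W) (e : ℕ → ℤ) (he : ∀ k < m, e k = 1 ∨ e k = -1)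
    (hred : ∀ k, k + 1 < m →
      (e k = -1 → e (k + 1) = 1 → val (X (k + 1)) ∉ A₁) ∧
      (e k = 1 → e (k + 1) = -1 → val (X (k + 1)) ∉ B₁)) :
    ∀ k, k + 1 < m →
      (e k = -1 → e (k + 1) = 1 →
        (QuotientGroup.mk' (Subgroup.normalClosure (relSet K A₁ B₁ W val)))
            (embZ K A₁ B₁ W (X (k + 1))) ∉
          Subgroup.map
            (QuotientGroup.mk' (Subgroup.normalClosure (relSet K A₁ B₁ W val)))
            (embA K A₁ B₁ W).range) ∧
      (e k = 1 → e (k + 1) = -1 →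
        (QuotientGroup.mk' (Subgroup.normalClosure (relSet K A₁ B₁ W val)))
            (embZ K A₁ B₁ W (X (k + 1))) ∉
          Subgroup.map
            (QuotientGroup.mk' (Subgroup.normalClosure (relSet K A₁ B₁ W val)))
            (embB K A₁ B₁ W).range) := by
  intro k hk
  set N := Subgroup.normalClosure (relSet K A₁ B₁ W val) with hN
  let f : FP K A₁ B₁ W →* K :=
    Monoid.Coprod.lift (FreeGroup.lift val) (Monoid.Coprod.lift A₁.subtype B₁.subtype)
  have hfZ : ∀ Z : W, f (embZ K A₁ B₁ W Z) = val Z := by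
    intro Z; simp [embZ, f]
  have hfA : ∀ a : A₁, f (embA K A₁ B₁ W a) = (a : K) := by
    intro a; simp [embA, f]
  have hfB : ∀ b : B₁, f (embB K A₁ B₁ W b) = (b : K) := by
    intro b; simp [embB, f]
  have hfC : ∀ c : A₁ ⊕ B₁, f (embC K A₁ B₁ W c) = kval K A₁ B₁ c := by
    rintro (a | b)
    · exact hfA a
    · exact hfB b
  have hker : N ≤ f.ker := by
    rw [hN]
    apply Subgroup.normalClosure_le_normal
    rintro r ⟨Z₁, Z₂, c₁, c₂, hrel, rfl⟩
    simp only [SetLike.mem_coe, MonoidHom.mem_ker, map_mul, map_inv, hfZ, hfC]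
    rw [hrel, mul_inv_cancel]
  let g : (FP K A₁ B₁ W ⧸ N) →* K := QuotientGroup.lift N f hker
  have hg : ∀ x, g (QuotientGroup.mk' N x) = f x := fun _ => rfl
  constructor
  · intro h1 h2 hmem
    obtain ⟨y, ⟨a, rfl⟩, hy⟩ := hmem
    apply (hred k hk).1 h1 h2
    have := congrArg g hy
    rw [hg, hg, hfA, hfZ] at this
    rw [← this]; exact a.2
  · intro h1 h2 hmem
    obtain ⟨y, ⟨b, rfl⟩, hy⟩ := hmem
    apply (hred k hk).2 h1 h2
    have := congrArg g hy
    rw [hg, hg, hfB, hfZ] at this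
    rw [← this]; exact b.2


end
end

section
/- The map Φ defined by Φ(x) = t^{−1} x t for x ∈ H₁ and Φ(x) = x for x ∈ H₂ extends to a well-defined group homomorphism Φ : G → G′, and this homomorphism is injective; hence the amalgamated free product G embeds into the HNN-extension G′. -/
/-!
`Φ` is well defined because the HNN relation `t⁻¹ a t = φ(a)` is the image under `Φ` of the
amalgamation relation `a = φ(a)`. It is injective because it has a left inverse `Ψ : G′ → G`,
sending `t ↦ 1` and `H₁ ∗ H₂` to `G` by the quotient map: `Ψ` respects the HNN relations
since `a = φ(a)` already holds in `G`, and `Ψ ∘ Φ` fixes the generators of `G`.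
-/

namespace MHNN

variable {H : Type*} [Group H] {ι : Type*} {A B : ι → Subgroup H} {ψ : ∀ i, A i ≃* B i}

theorem gen_inl_mul_gen_inl (h₁ h₂ : H) :
    gen A B ψ (.inl h₁) * gen A B ψ (.inl h₂) = gen A B ψ (.inl (h₁ * h₂)) := by
  have h := PresentedGroup.one_of_mem (rels := hnnRels A B ψ) (Or.inl ⟨h₁, h₂, rfl⟩)
  simp only [map_mul, map_inv, mul_inv_eq_one] at h
  exact h

theorem inv_gen_inr_mul_gen_inl_mul_gen_inr (i : ι) (a : A i) :
    (gen A B ψ (.inr i))⁻¹ * gen A B ψ (.inl a) * gen A B ψ (.inr i) =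
      gen A B ψ (.inl (ψ i a)) := by
  have h := PresentedGroup.one_of_mem (rels := hnnRels A B ψ) (Or.inr ⟨i, a, rfl⟩)
  simp only [map_mul, map_inv, mul_inv_eq_one] at h
  exact h

variable (A B ψ) in
def base : H →* MHNN A B ψ :=
  MonoidHom.mk' (fun h => gen A B ψ (.inl h)) fun h₁ h₂ => (gen_inl_mul_gen_inl h₁ h₂).symm

@[simp]
theorem base_apply (h : H) : base A B ψ h = gen A B ψ (.inl h) := rfl

def lift {K : Type*} [Group K] (f : H →* K) (t : ι → K)
    (hf : ∀ i (a : A i), (t i)⁻¹ * f a * t i = f (ψ i a)) : MHNN A B ψ →* K :=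
  PresentedGroup.toGroup (f := Sum.elim f t) <| by
    rintro r (⟨h₁, h₂, rfl⟩ | ⟨i, a, rfl⟩) <;> simp [hf]

@[simp]
theorem lift_gen {K : Type*} [Group K] (f : H →* K) (t : ι → K)
    (hf : ∀ i (a : A i), (t i)⁻¹ * f a * t i = f (ψ i a)) (x : H ⊕ ι) :
    lift f t hf (gen A B ψ x) = Sum.elim f t x :=
  PresentedGroup.toGroup.of _

end MHNN

section

variable (H₁ H₂ : Type*) [Group H₁] [Group H₂] (A₁ : Subgroup H₁) (A₂ : Subgroup H₂)
  (φ : A₁ ≃* A₂)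

/-- The relators `a φ(a)⁻¹` (`a ∈ A₁`) of the amalgamated free product inside the free
product `H₁ ∗ H₂`. -/
def amalRels : Set (Monoid.Coprod H₁ H₂) :=
  {r | ∃ a : A₁, r = Monoid.Coprod.inl (a : H₁) * (Monoid.Coprod.inr ((φ a : A₂) : H₂))⁻¹}

/-- The amalgamated free product `G = ⟨H₁ ∗ H₂ | a = φ(a) (a ∈ A₁)⟩`, i.e. the quotient of
the free product `H₁ ∗ H₂` by the normal closure of `{a φ(a)⁻¹ | a ∈ A₁}`. -/
abbrev AmalProd := Monoid.Coprod H₁ H₂ ⧸ Subgroup.normalClosure (amalRels H₁ H₂ A₁ A₂ φ)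

namespace AmalProd

variable {H₁ H₂ A₁ A₂ φ}

theorem mk_inl_eq_mk_inr (a : A₁) :
    (QuotientGroup.mk (Monoid.Coprod.inl (a : H₁)) : AmalProd H₁ H₂ A₁ A₂ φ) =
      QuotientGroup.mk (Monoid.Coprod.inr ((φ a : A₂) : H₂)) :=
  QuotientGroup.eq_iff_div_mem.mpr (Subgroup.subset_normalClosure ⟨a, div_eq_mul_inv _ _⟩)

def lift {K : Type*} [Group K] (f₁ : H₁ →* K) (f₂ : H₂ →* K)
    (hf : ∀ a : A₁, f₁ a = f₂ (φ a)) : AmalProd H₁ H₂ A₁ A₂ φ →* K :=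
  QuotientGroup.lift _ (Monoid.Coprod.lift f₁ f₂) <| Subgroup.normalClosure_le_normal <| by
    rintro _ ⟨a, rfl⟩
    simp [hf]

@[simp]
theorem lift_mk {K : Type*} [Group K] (f₁ : H₁ →* K) (f₂ : H₂ →* K)
    (hf : ∀ a : A₁, f₁ a = f₂ (φ a)) (w : Monoid.Coprod H₁ H₂) :
    lift f₁ f₂ hf (QuotientGroup.mk w) = Monoid.Coprod.lift f₁ f₂ w :=
  rfl

end AmalProd

/-- The map `Φ` with `Φ(x) = t⁻¹ x t` for `x ∈ H₁` and `Φ(x) = x` for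
`x ∈ H₂` extends to a well-defined group homomorphism from the amalgamated free product
`G` to the HNN-extension `G′ = ⟨H₁ ∗ H₂, t | t⁻¹ a t = φ(a) (a ∈ A₁)⟩` (with associated
subgroups the copies of `A₁` and `A₂` inside `H₁ ∗ H₂`, and associated isomorphism `φ′`
induced by `φ`), and this homomorphism is injective; hence `G` embeds into `G′`. -/
theorem amal_embeds_hnn
    (φ' : Subgroup.map (Monoid.Coprod.inl : H₁ →* Monoid.Coprod H₁ H₂) A₁ ≃*
          Subgroup.map (Monoid.Coprod.inr : H₂ →* Monoid.Coprod H₁ H₂) A₂)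
    (hφ' : ∀ a : A₁,
      ((φ' ⟨Monoid.Coprod.inl (a : H₁),
            Subgroup.mem_map_of_mem _ a.2⟩ :
          Subgroup.map (Monoid.Coprod.inr : H₂ →* Monoid.Coprod H₁ H₂) A₂) :
          Monoid.Coprod H₁ H₂) =
        Monoid.Coprod.inr ((φ a : A₂) : H₂)) :
    ∃ Φ : AmalProd H₁ H₂ A₁ A₂ φ →*
        MHNN (fun _ : Unit => Subgroup.map (Monoid.Coprod.inl : H₁ →* Monoid.Coprod H₁ H₂) A₁)
          (fun _ : Unit => Subgroup.map (Monoid.Coprod.inr : H₂ →* Monoid.Coprod H₁ H₂) A₂)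
          (fun _ : Unit => φ'),
      (∀ x : H₁,
        Φ (QuotientGroup.mk' (Subgroup.normalClosure (amalRels H₁ H₂ A₁ A₂ φ))
            (Monoid.Coprod.inl x)) =
          (gen _ _ _ (Sum.inr ()))⁻¹ * gen _ _ _ (Sum.inl (Monoid.Coprod.inl x)) *
            gen _ _ _ (Sum.inr ())) ∧
      (∀ x : H₂,
        Φ (QuotientGroup.mk' (Subgroup.normalClosure (amalRels H₁ H₂ A₁ A₂ φ))
            (Monoid.Coprod.inr x)) =
          gen _ _ _ (Sum.inl (Monoid.Coprod.inr x))) ∧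
      Function.Injective Φ := by
  set t := gen _ _ (fun _ : Unit => φ') (.inr ())
  have hconj (a : A₁) : t⁻¹ * gen _ _ _ (.inl (Monoid.Coprod.inl (a : H₁))) * t =
      gen _ _ _ (.inl (Monoid.Coprod.inr ((φ a : A₂) : H₂))) := by
    rw [← hφ']
    exact MHNN.inv_gen_inr_mul_gen_inl_mul_gen_inr () ⟨_, Subgroup.mem_map_of_mem _ a.2⟩
  let Φ := AmalProd.lift
    ((MulAut.conj t⁻¹).toMonoidHom.comp ((MHNN.base _ _ _).comp Monoid.Coprod.inl))
    ((MHNN.base _ _ _).comp Monoid.Coprod.inr) fun a => by simpa using hconj a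
  have hφ'_mk (a : Subgroup.map (Monoid.Coprod.inl : H₁ →* Monoid.Coprod H₁ H₂) A₁) :
      (QuotientGroup.mk (a : Monoid.Coprod H₁ H₂) : AmalProd H₁ H₂ A₁ A₂ φ) =
        QuotientGroup.mk (φ' a : Monoid.Coprod H₁ H₂) := by
    obtain ⟨_, a, ha, rfl⟩ := a
    exact (AmalProd.mk_inl_eq_mk_inr ⟨a, ha⟩).trans (congrArg _ (hφ' ⟨a, ha⟩).symm)
  let Ψ : MHNN _ _ (fun _ : Unit => φ') →* AmalProd H₁ H₂ A₁ A₂ φ :=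
    MHNN.lift (QuotientGroup.mk' _) (fun _ => 1) fun _ a => by simpa using hφ'_mk a
  have hΨΦ : Ψ.comp Φ = MonoidHom.id _ :=
    QuotientGroup.monoidHom_ext _ <| Monoid.Coprod.hom_ext (by ext; simp [Φ, Ψ, t])
      (by ext; simp [Φ, Ψ])
  refine ⟨Φ, fun x => by simp [Φ], fun x => by simp [Φ], ?_⟩
  exact Function.LeftInverse.injective (DFunLike.congr_fun hΨΦ)

end
end
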